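/- Let ℓ be a log-scale on X with constant Δ, and suppose α > 0 and C ∈ (0,1) satisfy d_n(x,y) ≥ C·e^{α(n − ℓ(x,y))} for all x,y and n (where d_n is the graph distance in Γ_n). Then for every β with 0 < β < α, the function d_β(x,y) = inf over chains x = x_0, …, x_m = y of Σ_{i=1}^m e^{−β·ℓ(x_{i-1},x_i)} is a metric on X, and there is a constant C₂ > 0 with C₂·e^{−β·ℓ(x,y)} ≤ d_β(x,y) ≤ e^{−β·ℓ(x,y)} for all x ≠ y. In particular d_β is a metric associated with ℓ of exponent β. -/

import Mathlib

/-!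
The metric axioms and the upper bound are immediate from the chain-infimum definition. For the
lower bound fix `s` with `e^{β(s+Δ)} + 1 ≤ C·e^{αs}` (possible since `β < α`) and show, by
induction on the length of a chain from `x` to `y`, that its weight is at least
`e^{−β(s+2Δ)}·e^{−βL}` with `L = ℓ(x,y)`. If some step has level at most `L + s + 2Δ`, that step
alone suffices. Otherwise coarsen the chain greedily so that every jump has level `> L + s` and
every jump but the last has level `≤ L + s + Δ`. The lower exponent forces `P ≥ C·e^{αs}` jumps,
and induction on the `P − 1 ≥ e^{β(s+Δ)}` segments spanned by the non-final jumps gives each a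
weight of at least `e^{−β(s+2Δ)}·e^{−β(L+s+Δ)}`.
-/

/-- A log-scale on a set `X` with constant `Δ`. -/
def IsLogScale {X : Type*} (ℓ : X → X → EReal) (Δ : ℝ) : Prop :=
  0 < Δ ∧
  (∀ x y, ℓ x y = ℓ y x) ∧
  (∀ x y, ℓ x y = ⊤ ↔ x = y) ∧
  (∀ x y, ℓ x y ≠ ⊥) ∧
  (∀ x y z, min (ℓ x y) (ℓ y z) - (Δ : EReal) ≤ ℓ x z)

/-- The weight `e^{−β·ℓ(u,v)}`, interpreted as `0` when `ℓ(u,v) = ∞`. -/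
noncomputable def chainWeight {X : Type*} (ℓ : X → X → EReal) (β : ℝ) (u v : X) : ℝ :=
  if ℓ u v = ⊤ then 0 else Real.exp (-β * (ℓ u v).toReal)

/-- `d_β(x,y)`: the infimum over chains `x = x_0, …, x_m = y` of
`Σ_{i=1}^m e^{−β·ℓ(x_{i−1}, x_i)}`. -/
noncomputable def dBeta {X : Type*} (ℓ : X → X → EReal) (β : ℝ) (x y : X) : ℝ :=
  sInf {s : ℝ | ∃ (m : ℕ) (c : ℕ → X), c 0 = x ∧ c m = y ∧
    s = ∑ i ∈ Finset.range m, chainWeight ℓ β (c i) (c (i + 1))}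

open Finset

namespace IsLogScale

variable {X : Type*} {ℓ : X → X → EReal} {Δ : ℝ}

lemma delta_pos (h : IsLogScale ℓ Δ) : 0 < Δ := h.1

lemma comm (h : IsLogScale ℓ Δ) (x y : X) : ℓ x y = ℓ y x := h.2.1 x y

lemma self_eq_top (h : IsLogScale ℓ Δ) (x : X) : ℓ x x = ⊤ := (h.2.2.1 x x).2 rfl

lemma ne_top (h : IsLogScale ℓ Δ) {x y : X} (hxy : x ≠ y) : ℓ x y ≠ ⊤ :=
  fun h' => hxy ((h.2.2.1 x y).1 h')

lemma ne_bot (h : IsLogScale ℓ Δ) (x y : X) : ℓ x y ≠ ⊥ := h.2.2.2.1 x y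

lemma min_sub_le (h : IsLogScale ℓ Δ) (x y z : X) :
    min (ℓ x y) (ℓ y z) - (Δ : EReal) ≤ ℓ x z :=
  h.2.2.2.2 x y z

end IsLogScale

/-- This is the hypothesis `d_n(x,y) ≥ C·e^{α(n − ℓ(x,y))}`, phrased through paths in `Γ_n`:
a chain all of whose steps have level at least `n` has length at least `d_n(x,y)`. -/
def IsLowerExponent {X : Type*} (ℓ : X → X → EReal) (α C : ℝ) : Prop :=
  ∀ (n : ℝ) (x y : X), x ≠ y →
    ∀ (m : ℕ) (c : ℕ → X), c 0 = x → c m = y →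
      (∀ i < m, (n : EReal) ≤ ℓ (c i) (c (i + 1))) →
      C * Real.exp (α * (n - (ℓ x y).toReal)) ≤ (m : ℝ)

lemma Finset.sum_range_sum_Ico {M : Type*} [AddCommMonoid M] (f : ℕ → M) {g : ℕ → ℕ}
    (hg : Monotone g) (Q : ℕ) :
    ∑ q ∈ range Q, ∑ i ∈ Ico (g q) (g (q + 1)), f i = ∑ i ∈ Ico (g 0) (g Q), f i := by
  induction Q with
  | zero => simp
  | succ Q ih =>
    rw [sum_range_succ, ih, sum_Ico_consecutive _ (hg (Nat.zero_le Q)) (hg Q.le_succ)]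

lemma exp_neg_mul_le_exp_neg_mul_toReal {β t : ℝ} (hβ : 0 ≤ β) {e : EReal} (hbot : e ≠ ⊥)
    (he : e ≤ t) : Real.exp (-β * t) ≤ Real.exp (-β * e.toReal) := by
  have : e.toReal ≤ t := by simpa using EReal.toReal_le_toReal he hbot (EReal.coe_ne_top t)
  exact Real.exp_le_exp.2 (by nlinarith)

section ChainWeight

variable {X : Type*} {ℓ : X → X → EReal} {β : ℝ}

lemma chainWeight_nonneg (u v : X) : 0 ≤ chainWeight ℓ β u v := by
  unfold chainWeight; split_ifs <;> positivity

lemma chainWeight_comm (hsymm : ∀ x y, ℓ x y = ℓ y x) (u v : X) :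
    chainWeight ℓ β u v = chainWeight ℓ β v u := by
  simp only [chainWeight, hsymm u v]

lemma chainWeight_of_ne_top {u v : X} (h : ℓ u v ≠ ⊤) :
    chainWeight ℓ β u v = Real.exp (-β * (ℓ u v).toReal) :=
  if_neg h

lemma exp_neg_mul_le_chainWeight (hβ : 0 ≤ β) {u v : X} {t : ℝ} (hbot : ℓ u v ≠ ⊥)
    (h : ℓ u v ≤ t) : Real.exp (-β * t) ≤ chainWeight ℓ β u v := by
  rw [chainWeight_of_ne_top (ne_top_of_le_ne_top (EReal.coe_ne_top t) h)]
  exact exp_neg_mul_le_exp_neg_mul_toReal hβ hbot h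

end ChainWeight

section ChainSums

variable {X : Type*} {ℓ : X → X → EReal} {β : ℝ}

def chainSums (ℓ : X → X → EReal) (β : ℝ) (x y : X) : Set ℝ :=
  {s : ℝ | ∃ (m : ℕ) (c : ℕ → X), c 0 = x ∧ c m = y ∧
    s = ∑ i ∈ range m, chainWeight ℓ β (c i) (c (i + 1))}

lemma dBeta_eq_sInf (x y : X) : dBeta ℓ β x y = sInf (chainSums ℓ β x y) := rfl

lemma zero_mem_chainSums (x : X) : 0 ∈ chainSums ℓ β x x :=
  ⟨0, fun _ => x, rfl, rfl, by simp⟩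

lemma chainWeight_mem_chainSums (x y : X) : chainWeight ℓ β x y ∈ chainSums ℓ β x y :=
  ⟨1, fun i => if i = 0 then x else y, by simp, by simp, by simp⟩

lemma chainSums_nonempty (x y : X) : (chainSums ℓ β x y).Nonempty :=
  ⟨_, chainWeight_mem_chainSums x y⟩

lemma nonneg_of_mem_chainSums {x y : X} {s : ℝ} (hs : s ∈ chainSums ℓ β x y) : 0 ≤ s := by
  obtain ⟨m, c, -, -, rfl⟩ := hs
  exact sum_nonneg fun i _ => chainWeight_nonneg _ _

lemma chainSums_bddBelow (x y : X) : BddBelow (chainSums ℓ β x y) :=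
  ⟨0, fun _ => nonneg_of_mem_chainSums⟩

lemma mem_chainSums_symm (hsymm : ∀ x y, ℓ x y = ℓ y x) {x y : X} {s : ℝ}
    (hs : s ∈ chainSums ℓ β x y) : s ∈ chainSums ℓ β y x := by
  obtain ⟨m, c, rfl, rfl, rfl⟩ := hs
  refine ⟨m, fun i => c (m - i), by simp, by simp, ?_⟩
  rw [← sum_range_reflect]
  refine sum_congr rfl fun i hi => ?_
  have hi : i < m := mem_range.1 hi
  rw [chainWeight_comm hsymm, show m - 1 - i + 1 = m - i by omega, show m - 1 - i = m - (i + 1) by omega]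

lemma add_mem_chainSums {x y z : X} {s t : ℝ} (hs : s ∈ chainSums ℓ β x y)
    (ht : t ∈ chainSums ℓ β y z) : s + t ∈ chainSums ℓ β x z := by
  obtain ⟨m, c, rfl, hcm, rfl⟩ := hs
  obtain ⟨n, d, hd0, rfl, rfl⟩ := ht
  set e : ℕ → X := fun i => if i ≤ m then c i else d (i - m)
  have he_left : ∀ i ≤ m, e i = c i := fun i hi => if_pos hi
  have he_right : ∀ i, e (m + i) = d i := by
    rintro (_ | i)
    · simp [e, hcm, hd0]
    · simp [e]
  refine ⟨m + n, e, he_left 0 (Nat.zero_le m), by rw [he_right], ?_⟩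
  rw [sum_range_add]
  congr 1
  · refine sum_congr rfl fun i hi => ?_
    have hi : i < m := mem_range.1 hi
    rw [he_left i hi.le, he_left (i + 1) hi]
  · refine sum_congr rfl fun i _ => ?_
    rw [he_right, add_assoc, he_right]

lemma dBeta_nonneg (x y : X) : 0 ≤ dBeta ℓ β x y :=
  le_csInf (chainSums_nonempty x y) fun _ => nonneg_of_mem_chainSums

lemma dBeta_self (x : X) : dBeta ℓ β x x = 0 :=
  le_antisymm (csInf_le (chainSums_bddBelow x x) (zero_mem_chainSums x)) (dBeta_nonneg x x)

lemma dBeta_le_chainWeight (x y : X) : dBeta ℓ β x y ≤ chainWeight ℓ β x y :=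
  csInf_le (chainSums_bddBelow x y) (chainWeight_mem_chainSums x y)

lemma dBeta_comm (hsymm : ∀ x y, ℓ x y = ℓ y x) (x y : X) : dBeta ℓ β x y = dBeta ℓ β y x := by
  have key : ∀ x y : X, dBeta ℓ β y x ≤ dBeta ℓ β x y := fun x y =>
    csInf_le_csInf (chainSums_bddBelow y x) (chainSums_nonempty x y)
      fun _ => mem_chainSums_symm hsymm
  exact le_antisymm (key y x) (key x y)

lemma dBeta_triangle (x y z : X) : dBeta ℓ β x z ≤ dBeta ℓ β x y + dBeta ℓ β y z := by
  rw [dBeta_eq_sInf, dBeta_eq_sInf, dBeta_eq_sInf, ← csInf_add (chainSums_nonempty x y)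
    (chainSums_bddBelow x y) (chainSums_nonempty y z) (chainSums_bddBelow y z)]
  refine csInf_le_csInf (chainSums_bddBelow x z)
    ((chainSums_nonempty x y).add (chainSums_nonempty y z)) ?_
  rintro _ ⟨s, hs, t, ht, rfl⟩
  exact add_mem_chainSums hs ht

end ChainSums

section LowerBound

variable {X : Type*} {ℓ : X → X → EReal} {Δ : ℝ}

/-- Jump from the current index `p` to the first later `j` with `ℓ(c p, c j) ≤ B`, or to `b` if
there is none; since `ℓ(c p, c (j - 1)) > B`, the quasi-ultrametric inequality puts the jump
above `B - Δ`. -/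
theorem exists_coarsening (hlog : IsLogScale ℓ Δ) (c : ℕ → X) (B : ℝ) {a b : ℕ} (hab : a ≤ b)
    (hstep : ∀ i, a ≤ i → i < b → (B : EReal) < ℓ (c i) (c (i + 1))) :
    ∃ (P : ℕ) (g : ℕ → ℕ), Monotone g ∧ g 0 = a ∧ g P = b ∧ (∀ q < P, g q < g (q + 1)) ∧
      (∀ q < P, ((B - Δ : ℝ) : EReal) < ℓ (c (g q)) (c (g (q + 1)))) ∧
      (∀ q, q + 1 < P → ℓ (c (g q)) (c (g (q + 1))) ≤ B) := by
  classical
  rcases hab.eq_or_lt with rfl | hab_lt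
  · exact ⟨0, fun _ => a, monotone_const, rfl, rfl, by simp, by simp, by simp⟩
  have hBΔ : ((B - Δ : ℝ) : EReal) ≤ B := EReal.coe_le_coe_iff.2 (by linarith [hlog.delta_pos])
  by_cases hnear : ∃ j, a < j ∧ j ≤ b ∧ ℓ (c a) (c j) ≤ B
  · obtain ⟨haj, hjb, hj⟩ := Nat.find_spec hnear
    set j := Nat.find hnear
    have hj1 : a + 1 < j := by
      by_contra! h
      rw [show j = a + 1 by omega] at hj
      exact (hstep a le_rfl hab_lt).not_ge hj
    have hfar : (B : EReal) < ℓ (c a) (c (j - 1)) := by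
      have := Nat.find_min hnear (show j - 1 < j by omega)
      push Not at this
      exact this (by omega) (by omega)
    have hlast : (B : EReal) < ℓ (c (j - 1)) (c j) := by
      simpa [Nat.sub_add_cancel (show 1 ≤ j by omega)] using hstep (j - 1) (by omega) (by omega)
    have hjump : ((B - Δ : ℝ) : EReal) < ℓ (c a) (c j) :=
      calc ((B - Δ : ℝ) : EReal) = B - Δ := EReal.coe_sub B Δ
        _ < min (ℓ (c a) (c (j - 1))) (ℓ (c (j - 1)) (c j)) - Δ :=
          EReal.sub_lt_sub_of_lt_of_le (lt_min hfar hlast) le_rfl (EReal.coe_ne_bot Δ)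
            (EReal.coe_ne_top Δ)
        _ ≤ ℓ (c a) (c j) := hlog.min_sub_le _ _ _
    obtain ⟨P, g, hmono, hg0, hgP, hlt, hcoarse, hnear'⟩ :=
      exists_coarsening hlog c B hjb fun i hi hib => hstep i (by omega) hib
    refine ⟨P + 1, fun q => if q = 0 then a else g (q - 1), ?_, by simp, by simpa, ?_, ?_, ?_⟩
    · refine monotone_nat_of_le_succ fun q => ?_
      cases q <;> simp [hg0, haj.le, hmono (Nat.le_succ _)]
    · rintro (_ | q) hq
      · simpa [hg0] using haj
      · simpa using hlt q (by omega)
    · rintro (_ | q) hq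
      · simpa [hg0] using hjump
      · simpa using hcoarse q (by omega)
    · rintro (_ | q) hq
      · simpa [hg0] using hj
      · simpa using hnear' q (by omega)
  · push Not at hnear
    refine ⟨1, fun q => if q = 0 then a else b, ?_, by simp, by simp, ?_, ?_, by simp⟩
    · refine monotone_nat_of_le_succ fun q => ?_
      cases q <;> simp [hab_lt.le]
    · simpa using hab_lt
    · simpa using hBΔ.trans_lt (hnear b hab_lt le_rfl)
termination_by b - a

theorem exp_mul_exp_le_sum_chainWeight {α β C s : ℝ} (hlog : IsLogScale ℓ Δ)
    (hlower : IsLowerExponent ℓ α C) (hβ : 0 ≤ β)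
    (hs : Real.exp (β * (s + Δ)) + 1 ≤ C * Real.exp (α * s)) (c : ℕ → X) {a b : ℕ}
    (hab : a ≤ b) (hne : c a ≠ c b) :
    Real.exp (-β * (s + 2 * Δ)) * Real.exp (-β * (ℓ (c a) (c b)).toReal) ≤
      ∑ i ∈ Ico a b, chainWeight ℓ β (c i) (c (i + 1)) := by
  set L := (ℓ (c a) (c b)).toReal
  set K := Real.exp (-β * (s + 2 * Δ))
  by_cases hlow : ∃ i ∈ Ico a b, ℓ (c i) (c (i + 1)) ≤ ((L + s + 2 * Δ : ℝ) : EReal)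
  · obtain ⟨i, hi, hle⟩ := hlow
    calc K * Real.exp (-β * L) = Real.exp (-β * (L + s + 2 * Δ)) := by
          simp only [K, ← Real.exp_add]; ring_nf
      _ ≤ chainWeight ℓ β (c i) (c (i + 1)) :=
          exp_neg_mul_le_chainWeight hβ (hlog.ne_bot _ _) hle
      _ ≤ _ := single_le_sum (fun j _ => chainWeight_nonneg (c j) (c (j + 1))) hi
  push Not at hlow
  obtain ⟨P, g, hmono, hg0, hgP, hlt, hcoarse, hnear⟩ :=
    exists_coarsening hlog c (L + s + Δ) hab fun i hai hib =>
      (EReal.coe_lt_coe_iff.2 (by linarith [hlog.delta_pos])).trans (hlow i (mem_Ico.2 ⟨hai, hib⟩))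
  have hP : C * Real.exp (α * s) ≤ P := by
    simpa [L] using hlower (L + s) (c a) (c b) hne P (fun q => c (g q)) (by simp [hg0])
      (by simp [hgP]) fun q hq => by simpa using (hcoarse q hq).le
  obtain ⟨Q, rfl⟩ : ∃ Q, P = Q + 1 := Nat.exists_eq_succ_of_ne_zero <| by
    rintro rfl
    push_cast at hP
    linarith [Real.exp_pos (β * (s + Δ))]
  have hQ : Real.exp (β * (s + Δ)) ≤ Q := by push_cast at hP; linarith
  have hblock : ∀ q < Q, K * Real.exp (-β * (L + s + Δ)) ≤
      ∑ i ∈ Ico (g q) (g (q + 1)), chainWeight ℓ β (c i) (c (i + 1)) := by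
    intro q hq
    have hq_near := hnear q (by omega)
    have hne' : c (g q) ≠ c (g (q + 1)) := by
      intro h
      rw [h, hlog.self_eq_top, top_le_iff] at hq_near
      exact EReal.coe_ne_top _ hq_near
    have hshorter : g (q + 1) - g q < b - a := by
      have := hlt q (by omega)
      have := hlt (q + 1) (by omega)
      have := hmono (show q + 1 + 1 ≤ Q + 1 by omega)
      have := hmono (Nat.zero_le q)
      omega
    refine (mul_le_mul_of_nonneg_left ?_ (Real.exp_pos _).le).trans
      (exp_mul_exp_le_sum_chainWeight hlog hlower hβ hs c (hmono q.le_succ) hne')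
    exact exp_neg_mul_le_exp_neg_mul_toReal hβ (hlog.ne_bot _ _) hq_near
  calc K * Real.exp (-β * L)
      = Real.exp (β * (s + Δ)) * (K * Real.exp (-β * (L + s + Δ))) := by
        simp only [K, ← Real.exp_add]; ring_nf
    _ ≤ Q * (K * Real.exp (-β * (L + s + Δ))) := by gcongr
    _ ≤ ∑ q ∈ range Q, ∑ i ∈ Ico (g q) (g (q + 1)), chainWeight ℓ β (c i) (c (i + 1)) := by
        simpa using card_nsmul_le_sum (range Q) _ _ fun q hq => hblock q (mem_range.1 hq)
    _ = ∑ i ∈ Ico a (g Q), chainWeight ℓ β (c i) (c (i + 1)) := by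
        rw [sum_range_sum_Ico _ hmono, hg0]
    _ ≤ ∑ i ∈ Ico a b, chainWeight ℓ β (c i) (c (i + 1)) :=
        sum_le_sum_of_subset_of_nonneg (Ico_subset_Ico_right (hgP ▸ hmono Q.le_succ))
          fun i _ _ => chainWeight_nonneg _ _
termination_by b - a

theorem exp_mul_exp_le_dBeta {α β C s : ℝ} (hlog : IsLogScale ℓ Δ)
    (hlower : IsLowerExponent ℓ α C) (hβ : 0 ≤ β)
    (hs : Real.exp (β * (s + Δ)) + 1 ≤ C * Real.exp (α * s)) {x y : X} (hxy : x ≠ y) :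
    Real.exp (-β * (s + 2 * Δ)) * Real.exp (-β * (ℓ x y).toReal) ≤ dBeta ℓ β x y := by
  refine le_csInf (chainSums_nonempty x y) ?_
  rintro _ ⟨m, c, rfl, rfl, rfl⟩
  rw [range_eq_Ico]
  exact exp_mul_exp_le_sum_chainWeight hlog hlower hβ hs c (Nat.zero_le m) hxy

end LowerBound

lemma exists_exp_add_one_le {α β C Δ : ℝ} (hC : 0 < C) (hβ : 0 ≤ β) (hβα : β < α)
    (hΔ : 0 ≤ Δ) : ∃ s, Real.exp (β * (s + Δ)) + 1 ≤ C * Real.exp (α * s) := by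
  set s := max 0 ((Real.log 2 + β * Δ - Real.log C) / (α - β))
  have hs : Real.log 2 + β * Δ - Real.log C ≤ (α - β) * s := by
    rw [← div_le_iff₀' (by linarith)]
    exact le_max_right _ _
  have hs0 : 0 ≤ s := le_max_left _ _
  have hone : 1 ≤ Real.exp (β * (s + Δ)) := Real.one_le_exp (mul_nonneg hβ (by linarith))
  refine ⟨s, ?_⟩
  calc Real.exp (β * (s + Δ)) + 1 ≤ 2 * Real.exp (β * (s + Δ)) := by linarith
    _ = Real.exp (Real.log 2 + β * (s + Δ)) := by rw [Real.exp_add, Real.exp_log two_pos]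
    _ ≤ Real.exp (Real.log C + α * s) := Real.exp_le_exp.2 (by nlinarith)
    _ = C * Real.exp (α * s) := by rw [Real.exp_add, Real.exp_log hC]

theorem dBeta_is_assoc_metric_general {X : Type*} (ℓ : X → X → EReal) (Δ : ℝ)
    (h : IsLogScale ℓ Δ) (α C : ℝ) (hC0 : 0 < C)
    (hlower : ∀ (n : ℝ) (x y : X), x ≠ y →
      ∀ (m : ℕ) (c : ℕ → X), c 0 = x → c m = y →
        (∀ i < m, (n : EReal) ≤ ℓ (c i) (c (i + 1))) →
        C * Real.exp (α * (n - (ℓ x y).toReal)) ≤ (m : ℝ))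
    (β : ℝ) (hβ0 : 0 < β) (hβα : β < α) :
    (∀ x y : X, dBeta ℓ β x y = dBeta ℓ β y x) ∧
    (∀ x y z : X, dBeta ℓ β x z ≤ dBeta ℓ β x y + dBeta ℓ β y z) ∧
    (∀ x : X, dBeta ℓ β x x = 0) ∧
    (∀ x y : X, x ≠ y → 0 < dBeta ℓ β x y) ∧
    ∃ C₂ > (0 : ℝ), ∀ x y : X, x ≠ y →
      C₂ * Real.exp (-β * (ℓ x y).toReal) ≤ dBeta ℓ β x y ∧
      dBeta ℓ β x y ≤ Real.exp (-β * (ℓ x y).toReal) := by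
  obtain ⟨s, hs⟩ := exists_exp_add_one_le hC0 hβ0.le hβα h.delta_pos.le
  have hlow : ∀ x y : X, x ≠ y →
      Real.exp (-β * (s + 2 * Δ)) * Real.exp (-β * (ℓ x y).toReal) ≤ dBeta ℓ β x y :=
    fun x y hxy => exp_mul_exp_le_dBeta h hlower hβ0.le hs hxy
  refine ⟨dBeta_comm h.comm, dBeta_triangle, dBeta_self, fun x y hxy => ?_, _, Real.exp_pos _,
    fun x y hxy => ⟨hlow x y hxy, ?_⟩⟩
  · exact (mul_pos (Real.exp_pos _) (Real.exp_pos _)).trans_le (hlow x y hxy)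
  · exact (dBeta_le_chainWeight x y).trans_eq (chainWeight_of_ne_top (h.ne_top hxy))

/-- If `α` is a lower exponent of the log-scale `ℓ` (with constant `C ∈ (0,1)`),
then for every `0 < β < α` the chain-infimum `d_β` is a metric on `X` satisfying
`C₂·e^{−β·ℓ(x,y)} ≤ d_β(x,y) ≤ e^{−β·ℓ(x,y)}` for all `x ≠ y`; in particular it
is a metric associated with `ℓ` of exponent `β`. -/
theorem dBeta_is_assoc_metric {X : Type*} (ℓ : X → X → EReal) (Δ : ℝ)
    (h : IsLogScale ℓ Δ) (α C : ℝ) (hα : 0 < α) (hC0 : 0 < C) (hC1 : C < 1)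
    (hlower : ∀ (n : ℝ) (x y : X), x ≠ y →
      ∀ (m : ℕ) (c : ℕ → X), c 0 = x → c m = y →
        (∀ i < m, (n : EReal) ≤ ℓ (c i) (c (i + 1))) →
        C * Real.exp (α * (n - (ℓ x y).toReal)) ≤ (m : ℝ))
    (β : ℝ) (hβ0 : 0 < β) (hβα : β < α) :
    (∀ x y : X, dBeta ℓ β x y = dBeta ℓ β y x) ∧
    (∀ x y z : X, dBeta ℓ β x z ≤ dBeta ℓ β x y + dBeta ℓ β y z) ∧
    (∀ x : X, dBeta ℓ β x x = 0) ∧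
    (∀ x y : X, x ≠ y → 0 < dBeta ℓ β x y) ∧
    ∃ C₂ > (0 : ℝ), ∀ x y : X, x ≠ y →
      C₂ * Real.exp (-β * (ℓ x y).toReal) ≤ dBeta ℓ β x y ∧
      dBeta ℓ β x y ≤ Real.exp (-β * (ℓ x y).toReal) :=
  dBeta_is_assoc_metric_general ℓ Δ h α C hC0 hlower β hβ0 hβα
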